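/- arXiv:1902.11186 — 4 statements merged into one kernel-verified Lean document; each statement's English description precedes it below -/
import Mathlib

section
/- There exists a row vector q : (Fin p ⊕ Fin m_u) → K such that q ᵥ* G = 0 (decoupling of control and disturbance inputs) and, for every j : Fin m_f, q ⬝ᵥ (Sum.elim (fun i => G_f i j) 0) ≠ 0 (every fault influences the residual), if and only if for every j : Fin m_f the rank of the matrix obtained by appending the column (fun i => G_f i j) to G_d is strictly greater than the rank of G_d. (Theorem 1: the exact fault detection problem is solvable by a rational filter if and only if the system is completely fault detectable.) -/
/-!
Write `q = (q₁, q₂)`. Decoupling from `[G_u G_d; I 0]` forces `q₂ = -q₁ G_u` and leaves only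
`q₁ G_d = 0`, while the fault outputs see `q₁` alone; so the problem is to find a single left
annihilator `q₁` of `G_d` with `q₁ G_{f_j} ≠ 0` for all `j`. For one `j` such a `q₁` exists iff
`G_{f_j}` lies outside the column space of `G_d` (duality), i.e. iff appending it raises the rank.
For all `j` at once, each condition `q₁ G_{f_j} ≠ 0` excludes a proper subspace of the left null
space of `G_d`, and a vector space over the infinite field `ℝ(s)` is not a finite union of proper
subspaces.
-/

open Matrix Submodule

section Decoupling

variable {R n m l ι : Type*} [Ring R] [Fintype n] [Fintype m]

theorem Matrix.dotProduct_sumElim_zero (q : n ⊕ m → R) (g : n → R) :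
    q ⬝ᵥ Sum.elim g 0 = (q ∘ Sum.inl) ⬝ᵥ g := by
  rw [← Sum.elim_comp_inl_inr q, sumElim_dotProduct_sumElim, dotProduct_zero, add_zero,
    Sum.elim_comp_inl]

theorem Matrix.vecMul_fromBlocks_one_zero_eq_zero_iff [DecidableEq m] (A : Matrix n m R)
    (B : Matrix n l R) (q : n ⊕ m → R) :
    q ᵥ* fromBlocks A B 1 0 = 0 ↔
      (q ∘ Sum.inl) ᵥ* B = 0 ∧ q ∘ Sum.inr = -((q ∘ Sum.inl) ᵥ* A) := by
  rw [vecMul_fromBlocks, vecMul_one, vecMul_zero, add_zero, ← Sum.elim_zero_zero, Sum.elim_eq_iff,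
    add_eq_zero_iff_eq_neg', and_comm]

theorem Matrix.exists_vecMul_fromBlocks_one_zero_eq_zero_iff [DecidableEq m] (A : Matrix n m R)
    (B : Matrix n l R) (g : ι → n → R) :
    (∃ q : n ⊕ m → R, q ᵥ* fromBlocks A B 1 0 = 0 ∧ ∀ i, q ⬝ᵥ Sum.elim (g i) 0 ≠ 0) ↔
      ∃ q : n → R, q ᵥ* B = 0 ∧ ∀ i, q ⬝ᵥ g i ≠ 0 := by
  simp only [vecMul_fromBlocks_one_zero_eq_zero_iff, dotProduct_sumElim_zero]
  refine ⟨fun ⟨q, ⟨hB, _⟩, hg⟩ => ⟨q ∘ Sum.inl, hB, hg⟩, fun ⟨q, hB, hg⟩ => ?_⟩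
  exact ⟨Sum.elim q (-(q ᵥ* A)), ⟨hB, rfl⟩, hg⟩

end Decoupling

section ColumnSpace

variable {K n m : Type*} [Field K] [Fintype n]

theorem Matrix.rank_fromCols_replicateCol_gt_iff [Fintype m] (A : Matrix n m K) (g : n → K) :
    (fromCols A (replicateCol (Fin 1) g)).rank > A.rank ↔ g ∉ span K (Set.range A.col) := by
  have hcol : (fromCols A (replicateCol (Fin 1) g)).col = Sum.elim A.col fun _ => g := by
    funext k; cases k <;> rfl
  rw [rank_eq_finrank_span_cols, rank_eq_finrank_span_cols, hcol, Set.Sum.elim_range,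
    Set.range_const, span_union, gt_iff_lt, ← lt_sup_iff_notMem]
  exact ⟨lt_of_le_of_finrank_lt_finrank le_sup_left, finrank_lt_finrank_of_lt⟩

theorem Matrix.exists_vecMul_eq_zero_dotProduct_ne_zero_iff (A : Matrix n m K) (g : n → K) :
    (∃ q, q ᵥ* A = 0 ∧ q ⬝ᵥ g ≠ 0) ↔ g ∉ span K (Set.range A.col) := by
  classical
  rw [← Subspace.dualAnnihilator_dualCoannihilator_eq (W := span K (Set.range A.col)),
    mem_dualCoannihilator]
  push Not
  rw [(dotProductEquiv K n).surjective.exists]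
  refine exists_congr fun q => and_congr ?_ Iff.rfl
  rw [← SetLike.mem_coe, coe_dualAnnihilator_span]
  simp only [Set.mem_ofPred_eq, Set.range_subset_iff, SetLike.mem_coe, LinearMap.mem_ker,
    dotProductEquiv_apply_apply]
  exact funext_iff

theorem Module.Dual.exists_forall_apply_ne_zero {V ι : Type*} [Infinite K] [AddCommGroup V]
    [Module K V] [Finite ι] {f : ι → Module.Dual K V} (hf : ∀ i, f i ≠ 0) :
    ∃ v, ∀ i, f i v ≠ 0 := by
  by_contra! h
  obtain ⟨i, hi⟩ := Subspace.exists_eq_top_of_iUnion_eq_univ (p := fun i => LinearMap.ker (f i))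
    (Set.iUnion_eq_univ_iff.mpr h)
  exact hf i (LinearMap.ker_eq_top.mp hi)

theorem Matrix.exists_vecMul_eq_zero_forall_dotProduct_ne_zero_iff {ι : Type*} [Infinite K]
    [Finite ι] (A : Matrix n m K) (g : ι → n → K) :
    (∃ q, q ᵥ* A = 0 ∧ ∀ i, q ⬝ᵥ g i ≠ 0) ↔ ∀ i, g i ∉ span K (Set.range A.col) := by
  simp_rw [← exists_vecMul_eq_zero_dotProduct_ne_zero_iff]
  refine ⟨fun ⟨q, hq, hg⟩ i => ⟨q, hq, hg i⟩, fun h => ?_⟩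
  let f : ι → Module.Dual K (LinearMap.ker A.vecMulLinear) := fun i =>
    ((dotProductBilin K K).flip (g i)).comp (LinearMap.ker A.vecMulLinear).subtype
  obtain ⟨⟨q, hq⟩, hqg⟩ := Module.Dual.exists_forall_apply_ne_zero (f := f) fun i hfi => by
    obtain ⟨q, hq, hqg⟩ := h i
    exact hqg (LinearMap.congr_fun hfi ⟨q, hq⟩)
  exact ⟨q, hq, hqg⟩

end ColumnSpace

/-- Theorem 1: the exact fault detection problem is solvable by a rational filter
if and only if the system is completely fault detectable. -/
theorem efdp_solvable_iff_completely_fault_detectable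
    (p m_u m_d m_f : ℕ)
    (G_u : Matrix (Fin p) (Fin m_u) (RatFunc ℝ))
    (G_d : Matrix (Fin p) (Fin m_d) (RatFunc ℝ))
    (G_f : Matrix (Fin p) (Fin m_f) (RatFunc ℝ)) :
    (∃ q : (Fin p ⊕ Fin m_u) → RatFunc ℝ,
        q ᵥ* (Matrix.fromBlocks G_u G_d 1 0) = 0 ∧
        ∀ j : Fin m_f, q ⬝ᵥ (Sum.elim (fun i => G_f i j) 0) ≠ 0) ↔
    (∀ j : Fin m_f,
        (Matrix.fromCols G_d (Matrix.replicateCol (Fin 1) (fun i => G_f i j))).rank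
          > G_d.rank) :=
  (exists_vecMul_fromBlocks_one_zero_eq_zero_iff G_u G_d G_f.col).trans <|
    (exists_vecMul_eq_zero_forall_dotProduct_ne_zero_iff G_d G_f.col).trans <|
      forall_congr' fun j => (rank_fromCols_replicateCol_gt_iff G_d (G_f.col j)).symm
end

section
/- Let S : Fin n_b → Fin m_f → Bool be a structure matrix. For each i : Fin n_b let Ĝ^{(i)} denote the matrix G_d augmented with all columns G_{f_k} of G_f for which S i k = false. Then the following are equivalent: (1) there exists a family of row vectors q : Fin n_b → ((Fin p ⊕ Fin m_u) → K) such that for every i, (q i) ᵥ* G = 0, (q i) ⬝ᵥ (Sum.elim (fun r => G_f r j) 0) = 0 for every j with S i j = false, and (q i) ⬝ᵥ (Sum.elim (fun r => G_f r j) 0) ≠ 0 for every j with S i j = true; (2) for every i : Fin n_b and every j : Fin m_f with S i j = true, the rank of the matrix obtained by appending the column (fun r => G_f r j) to Ĝ^{(i)} is strictly greater than the rank of Ĝ^{(i)}. (Theorem 3: the exact fault detection and isolation problem with structure matrix S is solvable by rational filters if and only if the system is S fault isolable.) -/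
/-!
Row by row, the control block of `fromBlocks G_u G_d 1 0` can always be cancelled by taking the
lower part of `q i` to be `-(v ᵥ* G_u)`, so only `v ᵥ* G_d = 0` constrains the upper part `v`.
Annihilating the fault columns with `S i j = false` as well means `v` kills the column space of
`Ĝ⁽ⁱ⁾`, and such a `v` can be nonzero on a column `c` iff `c` lies outside that column space
(dual annihilators), i.e. iff appending `c` raises the rank. One `v` must serve all faults with
`S i j = true` at once: each of them only excludes a proper subspace of the admissible `v`, and
over the infinite field `ℝ(s)` finitely many proper subspaces never cover a vector space.
-/

open Matrix Module Submodule

theorem Submodule.exists_mem_forall_apply_ne_zero {K V ι : Type*} [DivisionRing K] [Infinite K]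
    [AddCommGroup V] [Module K V] [Finite ι] (W : Submodule K V) (f : ι → Dual K V)
    (h : ∀ i, ∃ w ∈ W, f i w ≠ 0) : ∃ w ∈ W, ∀ i, f i w ≠ 0 := by
  have hcover : (⋃ i, (LinearMap.ker ((f i).comp W.subtype) : Set W)) ≠ Set.univ := by
    intro hcover
    obtain ⟨i, hi⟩ := Subspace.exists_eq_top_of_iUnion_eq_univ hcover
    obtain ⟨w, hw, hfw⟩ := h i
    exact hfw (LinearMap.ext_iff.mp (LinearMap.ker_eq_top.mp hi) ⟨w, hw⟩)
  obtain ⟨w, hw⟩ := (Set.ne_univ_iff_exists_notMem _).mp hcover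
  simp only [Set.mem_iUnion, not_exists, SetLike.mem_coe, LinearMap.mem_ker] at hw
  exact ⟨w, w.2, hw⟩

theorem Subspace.exists_mem_dualAnnihilator_forall_apply_ne_zero_iff {K V ι : Type*} [Field K]
    [Infinite K] [AddCommGroup V] [Module K V] [Finite ι] (W : Subspace K V) (c : ι → V) :
    (∃ φ ∈ W.dualAnnihilator, ∀ i, φ (c i) ≠ 0) ↔ ∀ i, c i ∉ W := by
  constructor
  · rintro ⟨φ, hφ, hne⟩ i hi
    exact hne i ((mem_dualAnnihilator φ).mp hφ _ hi)
  · intro h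
    refine W.dualAnnihilator.exists_mem_forall_apply_ne_zero (fun i => Dual.eval K V (c i))
      fun i => ?_
    simpa using (Subspace.forall_mem_dualAnnihilator_apply_eq_zero_iff W (c i)).not.mpr (h i)

namespace Matrix

variable {R F n m m' : Type*}

theorem span_range_col_fromCols [Semiring R] (A : Matrix n m R) (B : Matrix n m' R) :
    span R (Set.range (fromCols A B).col) =
      span R (Set.range A.col) ⊔ span R (Set.range B.col) := by
  rw [← span_union, ← Set.Sum.elim_range]
  congr 2
  ext (j | j) i <;> rfl

theorem vecMul_fromCols_eq_zero_iff [Semiring R] [Fintype n] (A : Matrix n m R)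
    (B : Matrix n m' R) (v : n → R) :
    v ᵥ* fromCols A B = 0 ↔ v ᵥ* A = 0 ∧ v ᵥ* B = 0 := by
  rw [vecMul_fromCols, ← Sum.elim_zero_zero, Sum.elim_eq_iff]

theorem dotProduct_sumElim_zero_s2 [Semiring R] [Fintype n] [Fintype m] (q : n ⊕ m → R)
    (c : n → R) : q ⬝ᵥ Sum.elim c 0 = (q ∘ Sum.inl) ⬝ᵥ c := by
  simp [dotProduct, Fintype.sum_sum_type]

theorem exists_vecMul_fromBlocks_one_zero_eq_zero_iff_s2 [Ring R] [Fintype n] [Fintype m]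
    [DecidableEq m] (Gu : Matrix n m R) (Gd : Matrix n m' R) (P : (n → R) → Prop) :
    (∃ q : n ⊕ m → R, q ᵥ* fromBlocks Gu Gd 1 0 = 0 ∧ P (q ∘ Sum.inl)) ↔
      ∃ v, v ᵥ* Gd = 0 ∧ P v := by
  simp only [vecMul_fromBlocks, vecMul_one, vecMul_zero, add_zero, ← Sum.elim_zero_zero,
    Sum.elim_eq_iff]
  constructor
  · rintro ⟨q, ⟨-, hd⟩, hP⟩
    exact ⟨q ∘ Sum.inl, hd, hP⟩
  · rintro ⟨v, hd, hP⟩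
    exact ⟨Sum.elim v (-(v ᵥ* Gu)), by simpa using hd, hP⟩

theorem dotProductEquiv_mem_dualAnnihilator_iff [CommSemiring R] [Fintype n] [DecidableEq n]
    (A : Matrix n m R) (v : n → R) :
    dotProductEquiv R n v ∈ (span R (Set.range A.col)).dualAnnihilator ↔ v ᵥ* A = 0 := by
  rw [← SetLike.mem_coe, coe_dualAnnihilator_span, Set.mem_ofPred_eq, Set.range_subset_iff,
    funext_iff]
  rfl

variable [Field F] [Fintype n]

theorem exists_vecMul_eq_zero_forall_dotProduct_ne_zero_iff_s2 [Infinite F] {ι : Type*} [Finite ι]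
    (A : Matrix n m F) (c : ι → n → F) :
    (∃ v, v ᵥ* A = 0 ∧ ∀ i, v ⬝ᵥ c i ≠ 0) ↔ ∀ i, c i ∉ span F (Set.range A.col) := by
  classical
  rw [← Subspace.exists_mem_dualAnnihilator_forall_apply_ne_zero_iff]
  refine (dotProductEquiv F n).toEquiv.exists_congr fun v => ?_
  rw [LinearEquiv.coe_toEquiv, dotProductEquiv_mem_dualAnnihilator_iff]
  rfl

theorem rank_lt_rank_fromCols_replicateCol_iff [Fintype m] {ι : Type*} [Fintype ι] [Nonempty ι]
    (A : Matrix n m F) (c : n → F) :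
    A.rank < (fromCols A (replicateCol ι c)).rank ↔ c ∉ span F (Set.range A.col) := by
  have hc : Set.range (replicateCol ι c).col = {c} := Set.range_const (ι := ι) (c := c)
  rw [rank_eq_finrank_span_cols, rank_eq_finrank_span_cols, span_range_col_fromCols, hc,
    ← lt_sup_iff_notMem]
  exact ⟨lt_of_le_of_finrank_lt_finrank le_sup_left, finrank_lt_finrank_of_lt⟩

theorem exists_isolating_vec_iff_rank_lt [Infinite F] [Fintype m] [Fintype m']
    (Gd : Matrix n m F) (Gf : Matrix n m' F) (s : m' → Bool) :
    (∃ v : n → F, v ᵥ* Gd = 0 ∧ (∀ j, s j = false → v ⬝ᵥ (fun r => Gf r j) = 0) ∧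
        (∀ j, s j = true → v ⬝ᵥ (fun r => Gf r j) ≠ 0)) ↔
      ∀ j, s j = true →
        (fromCols (fromCols Gd (of fun r (k : {k // s k = false}) => Gf r k.1))
            (replicateCol (Fin 1) (fun r => Gf r j))).rank >
          (fromCols Gd (of fun r (k : {k // s k = false}) => Gf r k.1)).rank := by
  set A := fromCols Gd (of fun r (k : {k // s k = false}) => Gf r k.1)
  have hA : ∀ v, v ᵥ* A = 0 ↔ v ᵥ* Gd = 0 ∧ ∀ j, s j = false → v ⬝ᵥ (fun r => Gf r j) = 0 :=
    fun v => (vecMul_fromCols_eq_zero_iff _ _ v).trans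
      (and_congr_right' (funext_iff.trans Subtype.forall))
  simp only [gt_iff_lt, rank_lt_rank_fromCols_replicateCol_iff]
  calc _ ↔ ∃ v, v ᵥ* A = 0 ∧ ∀ k : {j // s j = true}, v ⬝ᵥ Gf.col k ≠ 0 := by
          simp only [hA, and_assoc, Subtype.forall]
          rfl
    _ ↔ _ := (exists_vecMul_eq_zero_forall_dotProduct_ne_zero_iff_s2 A _).trans Subtype.forall

end Matrix

/-- Theorem 3: the exact fault detection and isolation problem with structure matrix `S`
is solvable by rational filters if and only if the system is `S` fault isolable. -/
theorem efdip_solvable_iff_S_fault_isolable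
    (p m_u m_d m_f n_b : ℕ)
    (G_u : Matrix (Fin p) (Fin m_u) (RatFunc ℝ))
    (G_d : Matrix (Fin p) (Fin m_d) (RatFunc ℝ))
    (G_f : Matrix (Fin p) (Fin m_f) (RatFunc ℝ))
    (S : Fin n_b → Fin m_f → Bool) :
    (∃ q : Fin n_b → ((Fin p ⊕ Fin m_u) → RatFunc ℝ),
        ∀ i : Fin n_b,
          (q i) ᵥ* (Matrix.fromBlocks G_u G_d 1 0) = 0 ∧
          (∀ j : Fin m_f, S i j = false →
            (q i) ⬝ᵥ (Sum.elim (fun r => G_f r j) 0) = 0) ∧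
          (∀ j : Fin m_f, S i j = true →
            (q i) ⬝ᵥ (Sum.elim (fun r => G_f r j) 0) ≠ 0)) ↔
    (∀ i : Fin n_b, ∀ j : Fin m_f, S i j = true →
        (Matrix.fromCols
            (Matrix.fromCols G_d
              (Matrix.of fun r (k : {k : Fin m_f // S i k = false}) => G_f r k.1))
            (Matrix.replicateCol (Fin 1) (fun r => G_f r j))).rank
          > (Matrix.fromCols G_d
              (Matrix.of fun r (k : {k : Fin m_f // S i k = false}) => G_f r k.1)).rank) := by
  simp only [dotProduct_sumElim_zero_s2, ← exists_isolating_vec_iff_rank_lt,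
    ← exists_vecMul_fromBlocks_one_zero_eq_zero_iff_s2 G_u G_d]
  rw [Classical.skolem]
end

section
/- There exists a matrix Q : Matrix (Fin m_f) (Fin p ⊕ Fin m_u) K with Q * G = 0 and such that the matrix R_f := Q * (the (Fin p ⊕ Fin m_u) × Fin m_f matrix whose top block is G_f and bottom block is 0) satisfies R_f i j ≠ 0 if and only if i = j (i.e., R_f is diagonal with all diagonal entries nonzero), if and only if rank of the matrix [G_d G_f] (G_d augmented with the columns of G_f) equals rank G_d + m_f. (Theorem 4: the exact fault detection and isolation problem with structure matrix S = I_{m_f} is solvable by rational filters if and only if the system is strongly isolable.) -/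
/-!
Write `Q = [Q₁ Q₂]`. Then `Q G = 0` means `Q₁ G_d = 0` and `Q₂ = -Q₁ G_u`, and `R_f = Q₁ G_f`;
a diagonal `R_f` with nonzero diagonal is invertible, so it can be normalised to `1`. Hence the
problem is solvable iff some linear map vanishes on the column space of `G_d` and is a left
inverse of `G_f`, i.e. iff `G_f` is injective with column space meeting that of `G_d` trivially.
By the dimension formula for `range G_d ⊔ range G_f` this is `rank [G_d G_f] = rank G_d + m_f`.
-/

open Matrix Module

namespace Submodule

variable {K U W : Type*} [Field K] [AddCommGroup U] [Module K U] [AddCommGroup W] [Module K W]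

theorem exists_le_ker_and_comp_eq_id_iff (V : Submodule K W) (g : U →ₗ[K] W) :
    (∃ l : W →ₗ[K] U, V ≤ LinearMap.ker l ∧ l ∘ₗ g = LinearMap.id) ↔
      Disjoint V (LinearMap.range g) ∧ LinearMap.ker g = ⊥ := by
  constructor
  · rintro ⟨l, hV, hl⟩
    refine ⟨disjoint_def.mpr ?_, LinearMap.ker_eq_bot_of_inverse hl⟩
    rintro _ hy ⟨x, rfl⟩
    have hx : x = 0 := by simpa [← LinearMap.comp_apply, hl] using hV hy
    simp [hx]
  · rintro ⟨hdisj, hker⟩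
    have hinj : LinearMap.ker (V.mkQ ∘ₗ g) = ⊥ := by
      refine eq_bot_iff.mpr fun x hx => ?_
      have hgx : g x ∈ V := by simpa using hx
      rw [← hker]
      exact disjoint_def.mp hdisj _ hgx ⟨x, rfl⟩
    obtain ⟨l, hl⟩ := (V.mkQ ∘ₗ g).exists_leftInverse_of_injective hinj
    exact ⟨l ∘ₗ V.mkQ, fun v hv => by simp [(Quotient.mk_eq_zero V).mpr hv],
      by rw [LinearMap.comp_assoc, hl]⟩

theorem finrank_sup_range_eq_add_iff [FiniteDimensional K U] [FiniteDimensional K W]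
    (V : Submodule K W) (g : U →ₗ[K] W) :
    finrank K ↥(V ⊔ LinearMap.range g) = finrank K V + finrank K U ↔
      Disjoint V (LinearMap.range g) ∧ LinearMap.ker g = ⊥ := by
  have hsup := finrank_sup_add_finrank_inf_eq V (LinearMap.range g)
  have hrange := LinearMap.finrank_range_add_finrank_ker g
  rw [disjoint_iff, ← finrank_eq_zero, ← finrank_eq_zero (S := LinearMap.ker g)]
  omega

end Submodule

namespace Matrix

variable {K : Type*} [Field K] {l m n k : Type*}

theorem range_mulVecLin_fromCols [Fintype n] [Fintype k] (A : Matrix m k K) (B : Matrix m n K) :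
    LinearMap.range (fromCols A B).mulVecLin
      = LinearMap.range A.mulVecLin ⊔ LinearMap.range B.mulVecLin := by
  have hcol : (fromCols A B).col = Sum.elim A.col B.col := by
    funext j; cases j <;> rfl
  simp only [range_mulVecLin, hcol, Set.Sum.elim_range, Submodule.span_union]

theorem exists_mul_eq_zero_and_mul_eq_one_iff_rank_fromCols [Fintype m] [Fintype n] [Fintype k]
    [DecidableEq n] (A : Matrix m k K) (B : Matrix m n K) :
    (∃ L : Matrix n m K, L * A = 0 ∧ L * B = 1) ↔
      (fromCols A B).rank = A.rank + Fintype.card n := by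
  classical
  rw [rank, rank, range_mulVecLin_fromCols, ← finrank_fintype_fun_eq_card K,
    Submodule.finrank_sup_range_eq_add_iff, ← Submodule.exists_le_ker_and_comp_eq_id_iff,
    toLin'.surjective.exists]
  refine exists_congr fun L => and_congr ?_ ?_
  · rw [LinearMap.range_le_ker_iff, ← toLin'.map_eq_zero_iff, toLin'_mul]
    rfl
  · rw [← toLin'.injective.eq_iff, toLin'_mul, toLin'_one]
    rfl

theorem exists_mul_eq_zero_and_mul_eq_one_iff_isUnit {R : Type*} [CommRing R] [Fintype m]
    [Fintype n] [DecidableEq n] (A : Matrix m k R) (B : Matrix m n R) :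
    (∃ L : Matrix n m R, L * A = 0 ∧ L * B = 1) ↔
      ∃ L : Matrix n m R, L * A = 0 ∧ IsUnit (L * B) := by
  constructor
  · rintro ⟨L, hA, hB⟩
    exact ⟨L, hA, hB ▸ isUnit_one⟩
  · rintro ⟨L, hA, hB⟩
    refine ⟨(L * B)⁻¹ * L, by rw [Matrix.mul_assoc, hA, Matrix.mul_zero], ?_⟩
    rw [Matrix.mul_assoc, nonsing_inv_mul _ ((isUnit_iff_isUnit_det _).mp hB)]

theorem isUnit_of_apply_ne_zero_iff_eq [Fintype n] [DecidableEq n] (M : Matrix n n K)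
    (hM : ∀ i j, M i j ≠ 0 ↔ i = j) : IsUnit M := by
  have hdiag : M = diagonal fun i => M i i := by
    ext i j
    rcases eq_or_ne i j with rfl | hij
    · simp
    · simpa [diagonal_apply_ne _ hij] using mt (hM i j).mp hij
  rw [hdiag, isUnit_diagonal, Pi.isUnit_iff]
  exact fun i => ((hM i i).mpr rfl).isUnit

theorem one_apply_ne_zero_iff {R : Type*} [Zero R] [One R] [NeZero (1 : R)] [DecidableEq n]
    (i j : n) : (1 : Matrix n n R) i j ≠ 0 ↔ i = j := by
  rcases eq_or_ne i j with rfl | hij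
  · simp
  · simp [one_apply_ne hij, hij]

theorem exists_mul_fromBlocks_one_zero_eq_zero_and_iff {R : Type*} [Ring R] {n' : Type*}
    [Fintype m] [Fintype k] [DecidableEq k] (P : Matrix l n R → Prop) (A : Matrix m k R)
    (B : Matrix m n' R) (C : Matrix m n R) :
    (∃ Q : Matrix l (m ⊕ k) R,
        Q * fromBlocks A B 1 (0 : Matrix k n' R) = 0 ∧ P (Q * fromRows C (0 : Matrix k n R))) ↔
      ∃ Q₁ : Matrix l m R, Q₁ * B = 0 ∧ P (Q₁ * C) := by
  constructor
  · rintro ⟨Q, hQ, hP⟩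
    rw [← fromCols_toCols Q, fromCols_mul_fromBlocks, ← fromCols_zero] at hQ
    rw [← fromCols_toCols Q, fromCols_mul_fromRows, Matrix.mul_zero, add_zero] at hP
    exact ⟨Q.toCols₁, by simpa using (fromCols_inj hQ).2, hP⟩
  · rintro ⟨Q₁, hB, hP⟩
    refine ⟨fromCols Q₁ (-(Q₁ * A)), ?_, ?_⟩
    · simp [fromCols_mul_fromBlocks, hB]
    · simpa [fromCols_mul_fromRows] using hP

end Matrix

/-- Theorem 4: the exact fault detection and isolation problem with structure matrix
`S = I_{m_f}` is solvable by rational filters if and only if the system is strongly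
isolable, i.e. `rank [G_d G_f] = rank G_d + m_f`. -/
theorem efdip_diagonal_solvable_iff_strongly_isolable
    (p m_u m_d m_f : ℕ)
    (G_u : Matrix (Fin p) (Fin m_u) (RatFunc ℝ))
    (G_d : Matrix (Fin p) (Fin m_d) (RatFunc ℝ))
    (G_f : Matrix (Fin p) (Fin m_f) (RatFunc ℝ)) :
    (∃ Q : Matrix (Fin m_f) (Fin p ⊕ Fin m_u) (RatFunc ℝ),
        Q * (Matrix.fromBlocks G_u G_d 1 0)
            = (0 : Matrix (Fin m_f) (Fin m_u ⊕ Fin m_d) (RatFunc ℝ)) ∧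
        (∀ i j : Fin m_f,
          (Q * (Matrix.fromRows G_f (0 : Matrix (Fin m_u) (Fin m_f) (RatFunc ℝ)))) i j ≠ 0
            ↔ i = j)) ↔
    (Matrix.fromCols G_d G_f).rank = G_d.rank + m_f := by
  have hrank := exists_mul_eq_zero_and_mul_eq_one_iff_rank_fromCols G_d G_f
  rw [Fintype.card_fin] at hrank
  -- not `rw`: the products in the statement elaborate to the (defeq) `CStarMatrix` instance
  refine (exists_mul_fromBlocks_one_zero_eq_zero_and_iff (fun R => ∀ i j, R i j ≠ 0 ↔ i = j)
    G_u G_d G_f).trans (Iff.trans ?_ hrank)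
  constructor
  · rintro ⟨L, hd, hf⟩
    exact (exists_mul_eq_zero_and_mul_eq_one_iff_isUnit G_d G_f).mpr
      ⟨L, hd, isUnit_of_apply_ne_zero_iff_eq _ hf⟩
  · rintro ⟨L, hd, hf⟩
    exact ⟨L, hd, by simp only [hf, one_apply_ne_zero_iff, implies_true]⟩
end

section
/- Let K be a field, G_d : Matrix (Fin p) (Fin m_d) K, G_f : Matrix (Fin p) (Fin m_f) K, and M_r : Matrix (Fin q) (Fin m_f) K with rank M_r = m_f (full column rank). Then the rank of [G_f G_d] (horizontal concatenation) equals the rank of the block matrix with top block row [G_f G_d] and bottom block row [M_r 0], if and only if rank [G_f G_d] = rank G_d + m_f. (The solvability condition of the exact model-matching problem reduces to strong isolability when the reference model has full column rank.) -/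
/-!
If `M_r` has full column rank, its `mulVec` is injective, so every vector in the kernel of
`[[G_f, G_d], [M_r, 0]]` vanishes on the first block of coordinates: the kernel is the kernel of
`G_d`. Rank–nullity then gives `rank [[G_f, G_d], [M_r, 0]] = rank G_d + m_f`, and the two sides
of the equivalence are the same equation.
-/

open Matrix

namespace Matrix

variable {K m n m₁ m₂ n₁ n₂ : Type*} [Field K]

theorem rank_add_finrank_ker [Fintype n] (A : Matrix m n K) :
    A.rank + Module.finrank K (LinearMap.ker A.mulVecLin) = Fintype.card n := by
  rw [rank, LinearMap.finrank_range_add_finrank_ker, Module.finrank_fintype_fun_eq_card]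

theorem mulVec_injective_iff_rank_eq_card [Fintype n] (A : Matrix m n K) :
    Function.Injective A.mulVec ↔ A.rank = Fintype.card n := by
  rw [← coe_mulVecLin, ← LinearMap.ker_eq_bot, ← Submodule.finrank_eq_zero]
  have := A.rank_add_finrank_ker
  omega

variable [Fintype n₁] [Fintype n₂]

theorem fromBlocks_zero₂₂_mulVec_eq_zero_iff (A : Matrix m₁ n₁ K) (B : Matrix m₁ n₂ K)
    {C : Matrix m₂ n₁ K} (hC : Function.Injective C.mulVec) (v : n₁ ⊕ n₂ → K) :
    fromBlocks A B C 0 *ᵥ v = 0 ↔ v ∘ Sum.inl = 0 ∧ B *ᵥ (v ∘ Sum.inr) = 0 := by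
  rw [fromBlocks_mulVec, zero_mulVec, add_zero, ← Sum.elim_zero_zero, Sum.elim_eq_iff]
  constructor
  · rintro ⟨hAB, hC0⟩
    have hinl : v ∘ Sum.inl = 0 := hC (by rw [hC0, mulVec_zero])
    rw [hinl, mulVec_zero, zero_add] at hAB
    exact ⟨hinl, hAB⟩
  · rintro ⟨hinl, hB⟩
    rw [hinl, hB, mulVec_zero, mulVec_zero, zero_add]
    exact ⟨rfl, rfl⟩

-- `sumArrowLequivProdArrow.symm ∘ₗ inr` is extension by zero on the first block of coordinates.
theorem ker_mulVecLin_fromBlocks_zero₂₂ (A : Matrix m₁ n₁ K) (B : Matrix m₁ n₂ K)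
    {C : Matrix m₂ n₁ K} (hC : Function.Injective C.mulVec) :
    LinearMap.ker (fromBlocks A B C 0).mulVecLin
      = (LinearMap.ker B.mulVecLin).map
          ((LinearEquiv.sumArrowLequivProdArrow n₁ n₂ K K).symm.toLinearMap ∘ₗ
            LinearMap.inr K (n₁ → K) (n₂ → K)) := by
  ext v
  simp only [LinearMap.mem_ker, mulVecLin_apply, fromBlocks_zero₂₂_mulVec_eq_zero_iff A B hC,
    Submodule.mem_map, LinearMap.coe_comp, Function.comp_apply, LinearMap.inr_apply,
    LinearEquiv.coe_coe]
  constructor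
  · rintro ⟨hinl, hB⟩
    refine ⟨v ∘ Sum.inr, hB, ?_⟩
    ext (i | i)
    · simpa using (congrFun hinl i).symm
    · simp
  · rintro ⟨y, hy, rfl⟩
    refine ⟨?_, ?_⟩
    · ext i; simp
    · have hinr : (LinearEquiv.sumArrowLequivProdArrow n₁ n₂ K K).symm (0, y) ∘ Sum.inr = y := by
        ext i; simp
      rwa [hinr]

theorem rank_fromBlocks_zero₂₂_of_mulVec_injective (A : Matrix m₁ n₁ K) (B : Matrix m₁ n₂ K)
    {C : Matrix m₂ n₁ K} (hC : Function.Injective C.mulVec) :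
    (fromBlocks A B C 0).rank = B.rank + Fintype.card n₁ := by
  have hker : Module.finrank K (LinearMap.ker (fromBlocks A B C 0).mulVecLin)
      = Module.finrank K (LinearMap.ker B.mulVecLin) := by
    rw [ker_mulVecLin_fromBlocks_zero₂₂ A B hC]
    refine (Submodule.equivMapOfInjective _ ?_ _).finrank_eq.symm
    exact (LinearEquiv.sumArrowLequivProdArrow n₁ n₂ K K).symm.injective.comp
      LinearMap.inr_injective
  have hT := (fromBlocks A B C 0).rank_add_finrank_ker
  have hB := B.rank_add_finrank_ker
  rw [Fintype.card_sum] at hT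
  omega

end Matrix

/-- When the reference model `M_r` has full column rank, the solvability condition of the
exact model-matching problem reduces to strong isolability. -/
theorem emmp_rank_condition_iff_strong_isolability
    (K : Type*) [Field K] (p m_d m_f q : ℕ)
    (G_d : Matrix (Fin p) (Fin m_d) K)
    (G_f : Matrix (Fin p) (Fin m_f) K)
    (M_r : Matrix (Fin q) (Fin m_f) K)
    (hMr : M_r.rank = m_f) :
    ((Matrix.fromCols G_f G_d).rank
        = (Matrix.fromBlocks G_f G_d M_r (0 : Matrix (Fin q) (Fin m_d) K)).rank) ↔
    (Matrix.fromCols G_f G_d).rank = G_d.rank + m_f := by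
  have hMr_inj : Function.Injective M_r.mulVec := by
    rwa [mulVec_injective_iff_rank_eq_card, Fintype.card_fin]
  rw [rank_fromBlocks_zero₂₂_of_mulVec_injective G_f G_d hMr_inj, Fintype.card_fin]
end
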